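/- For every a ≥ 1 and every t ∈ ℝ with t ≠ 0, lim_{ε→0⁺} ∫_{−∞}^{∞} e^{−itτ} / (a² − (τ + iε)²) dτ = 2π χ_{[0,∞)}(t) · sin(t a)/a, where the integral is an (improper/oscillatory) Lebesgue integral in τ and χ_{[0,∞)} is the indicator of [0,∞). In particular, with a = √(1+|ξ|²) for ξ ∈ ℝⁿ, the kernel of the regularized Klein–Gordon resolvent converges as ε → 0⁺ to 2π χ_{[0,∞)}(t) sin(t√(1+|ξ|²))/√(1+|ξ|²). -/

import Mathlib

/-!
For `ε > 0` the symbol `τ ↦ (a² - (τ + iε)²)⁻¹`, read at `τ = -2πξ`, is the Fourier transform of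
the damped retarded kernel `k_ε(s) = χ_{[0,∞)}(s) sin(as) e^{-εs} / a`: on `s ≥ 0` this is a
Laplace transform, computed by splitting `sin` into two exponentials. The symbol is bounded by a
multiple of `(1 + τ²)⁻¹`, hence integrable, and `k_ε` is continuous because `sin 0 = 0`, so Fourier
inversion gives `∫ e^{-itτ} / (a² - (τ + iε)²) dτ = 2π k_ε(t)` exactly. The limit
`ε → 0⁺` is then just continuity of `k_ε(t)` in `ε`.
-/

open Complex MeasureTheory Set
open scoped Real FourierTransform

theorem integral_sin_mul_exp_mul_complex_Ioi {c : ℂ} (hc : c.re < 0) (a : ℝ) :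
    ∫ s in Ioi (0 : ℝ), (Real.sin (a * s) : ℂ) * cexp (c * s) = a / (c ^ 2 + a ^ 2) := by
  have hminus : (c - a * I).re < 0 := by simpa using hc
  have hplus : (c + a * I).re < 0 := by simpa using hc
  have hne : ∀ z : ℂ, z.re < 0 → z ≠ 0 := fun z hz h => by simp [h] at hz
  have hsplit : ∀ s : ℝ, (Real.sin (a * s) : ℂ) * cexp (c * s)
      = I / 2 * (cexp ((c - a * I) * s) - cexp ((c + a * I) * s)) := by
    intro s
    rw [show (c - a * I) * s = c * s + -((a * s : ℝ) : ℂ) * I by push_cast; ring,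
      show (c + a * I) * s = c * s + ((a * s : ℝ) : ℂ) * I by push_cast; ring,
      Complex.exp_add, Complex.exp_add, ofReal_sin, Complex.sin]
    ring
  have hprod : c ^ 2 + (a : ℂ) ^ 2 = (c - a * I) * (c + a * I) := by
    linear_combination (a : ℂ) ^ 2 * I_sq
  simp_rw [hsplit]
  rw [integral_const_mul, integral_sub (integrableOn_exp_mul_complex_Ioi hminus 0)
    (integrableOn_exp_mul_complex_Ioi hplus 0), integral_exp_mul_complex_Ioi hminus,
    integral_exp_mul_complex_Ioi hplus, ofReal_zero, mul_zero, mul_zero, Complex.exp_zero, hprod,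
    eq_div_iff (mul_ne_zero (hne _ hminus) (hne _ hplus))]
  generalize hz₁ : c - a * I = z₁ at hminus ⊢
  generalize hz₂ : c + a * I = z₂ at hplus ⊢
  have hz₁_ne := hne _ hminus
  have hz₂_ne := hne _ hplus
  field_simp
  linear_combination I * hz₂ - I * hz₁ - 2 * a * I_sq

theorem norm_inv_sq_sub_sq_le (a : ℝ) {w : ℂ} (hw : w.im ≠ 0) :
    ‖((a : ℂ) ^ 2 - w ^ 2)⁻¹‖ ≤ (1 + (1 + a ^ 2) / w.im ^ 2) * (1 + w.re ^ 2)⁻¹ := by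
  have hN : ‖(a : ℂ) ^ 2 - w ^ 2‖ = ‖(a : ℂ) + w‖ * ‖(a : ℂ) - w‖ := by
    rw [sq_sub_sq, norm_mul]
  set N := ‖(a : ℂ) ^ 2 - w ^ 2‖
  have him₁ : |w.im| ≤ ‖(a : ℂ) - w‖ := by simpa using abs_im_le_norm ((a : ℂ) - w)
  have him₂ : |w.im| ≤ ‖(a : ℂ) + w‖ := by simpa using abs_im_le_norm ((a : ℂ) + w)
  have hre₁ : |a - w.re| ≤ ‖(a : ℂ) - w‖ := by simpa using abs_re_le_norm ((a : ℂ) - w)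
  have hre₂ : |a + w.re| ≤ ‖(a : ℂ) + w‖ := by simpa using abs_re_le_norm ((a : ℂ) + w)
  have him_le : w.im ^ 2 ≤ N := by
    rw [hN, sq, ← abs_mul_abs_self]
    exact mul_le_mul him₂ him₁ (abs_nonneg _) (norm_nonneg _)
  have hre_le : w.re ^ 2 - a ^ 2 ≤ N := by
    calc w.re ^ 2 - a ^ 2 ≤ |a + w.re| * |a - w.re| := by
          rw [← abs_mul]; exact (neg_le_abs _).trans_eq' (by ring)
      _ ≤ N := hN ▸ mul_le_mul hre₂ hre₁ (abs_nonneg _) (norm_nonneg _)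
  have him_pos : 0 < w.im ^ 2 := by positivity
  have hN_pos : 0 < N := him_pos.trans_le him_le
  rw [norm_inv, ← div_eq_mul_inv, le_div_iff₀ (by positivity), inv_mul_le_iff₀ hN_pos]
  have : 1 + a ^ 2 ≤ N * ((1 + a ^ 2) / w.im ^ 2) := by
    rw [mul_div_assoc', le_div_iff₀ him_pos]
    exact mul_le_mul_of_nonneg_left him_le (by positivity) |>.trans_eq (mul_comm _ _)
  nlinarith

theorem integrable_inv_sq_sub_sq (a : ℝ) {ε : ℝ} (hε : ε ≠ 0) :
    Integrable fun τ : ℝ => ((a : ℂ) ^ 2 - (τ + I * ε) ^ 2)⁻¹ := by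
  refine (integrable_inv_one_add_sq.const_mul (1 + (1 + a ^ 2) / ε ^ 2)).mono'
    (by fun_prop : Measurable fun τ : ℝ => ((a : ℂ) ^ 2 - (τ + I * ε) ^ 2)⁻¹).aestronglyMeasurable
    (ae_of_all _ fun τ => ?_)
  simpa using norm_inv_sq_sub_sq_le a (w := τ + I * ε) (by simpa using hε)

theorem integral_exp_smul_fourier_neg_div {E : Type*} [NormedAddCommGroup E] [NormedSpace ℂ E]
    [CompleteSpace E] {f : ℝ → E} (hf : Integrable f) (hf' : Integrable (𝓕 f)) {t : ℝ}
    (ht : ContinuousAt f t) :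
    ∫ τ : ℝ, cexp (-I * t * τ) • 𝓕 f (-τ / (2 * π)) = (2 * π) • f t := by
  set G : ℝ → E := fun τ => cexp (-I * t * τ) • 𝓕 f (-τ / (2 * π))
  have h2π : 0 < 2 * π := by positivity
  have hsubst : ∫ x : ℝ, G (-(2 * π) * x) = (2 * π)⁻¹ • ∫ τ, G τ := by
    rw [Measure.integral_comp_mul_left, abs_inv, abs_neg, abs_of_pos h2π]
  have hG : ∀ x : ℝ, G (-(2 * π) * x) = cexp (↑(2 * π * inner ℝ x t) * I) • 𝓕 f x := by
    intro x
    simp only [G, Real.inner_apply]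
    congr 2
    · push_cast
      ring
    · field_simp
  rw [← hf.fourierInv_fourier_eq hf' ht, Real.fourierInv_eq', ← integral_congr_ae (ae_of_all _ hG),
    hsubst, smul_inv_smul₀ h2π.ne']

/-- The retarded fundamental solution of `∂ₛ² + a²`, damped by `e^{-εs}`. -/
noncomputable def retardedKernel (a ε : ℝ) : ℝ → ℂ :=
  indicator (Ici 0) fun s => Real.sin (a * s) / a * cexp (-ε * s)

theorem retardedKernel_apply (a ε s : ℝ) :
    retardedKernel a ε s = if 0 ≤ s then Real.sin (a * s) / a * cexp (-ε * s) else 0 := by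
  simp [retardedKernel, indicator_apply]

theorem continuous_retardedKernel (a ε : ℝ) : Continuous (retardedKernel a ε) := by
  simp_rw [funext (retardedKernel_apply a ε)]
  exact Continuous.if_le (by fun_prop) continuous_const continuous_const continuous_id
    fun s hs => by simp [← hs]

theorem continuous_retardedKernel_damping (a s : ℝ) :
    Continuous fun ε => retardedKernel a ε s := by
  simp_rw [retardedKernel_apply]
  split_ifs <;> fun_prop

theorem integrable_retardedKernel (a : ℝ) {ε : ℝ} (hε : 0 < ε) :
    Integrable (retardedKernel a ε) := by
  rw [retardedKernel, integrable_indicator_iff measurableSet_Ici,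
    integrableOn_Ici_iff_integrableOn_Ioi]
  refine (integrableOn_exp_mul_complex_Ioi (a := -ε) (by simpa using hε) 0).bdd_mul
    (c := |a|⁻¹) (by fun_prop) (ae_of_all _ fun s => ?_)
  rw [← ofReal_div, norm_real, Real.norm_eq_abs, abs_div, div_eq_mul_inv]
  exact mul_le_of_le_one_left (by positivity) (Real.abs_sin_le_one _)

theorem fourier_retardedKernel {a ε : ℝ} (ha : a ≠ 0) (hε : 0 < ε) (ξ : ℝ) :
    𝓕 (retardedKernel a ε) ξ = ((a : ℂ) ^ 2 - ((-(2 * π) * ξ : ℝ) + I * ε) ^ 2)⁻¹ := by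
  set c : ℂ := -(ε + 2 * π * ξ * I)
  have hc : c.re < 0 := by simpa [c] using hε
  have hexp : ∀ v : ℝ, cexp (↑(-2 * π * v * ξ) * I) * cexp (-ε * v) = cexp (c * v) := by
    intro v
    rw [← Complex.exp_add]
    congr 1
    push_cast [c]
    ring
  have hintegrand : ∀ v : ℝ, cexp (↑(-2 * π * v * ξ) * I) •
      ((Real.sin (a * v) : ℂ) / a * cexp (-ε * v)) = Real.sin (a * v) * cexp (c * v) / a := by
    intro v
    rw [smul_eq_mul, ← hexp]
    ring
  have hdenom : (a : ℂ) ^ 2 - ((-(2 * π) * ξ : ℝ) + I * ε) ^ 2 = c ^ 2 + a ^ 2 := by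
    push_cast [c]
    linear_combination (-((ε : ℂ) ^ 2 + (2 * π * ξ) ^ 2)) * I_sq
  rw [Real.fourier_real_eq_integral_exp_smul, retardedKernel]
  simp_rw [← indicator_smul_apply (Ici 0) (fun v : ℝ => cexp (↑(-2 * π * v * ξ) * I))]
  rw [integral_indicator measurableSet_Ici, integral_Ici_eq_integral_Ioi]
  simp_rw [hintegrand]
  rw [integral_div, integral_sin_mul_exp_mul_complex_Ioi hc, hdenom,
    div_div_cancel_left' (ofReal_ne_zero.mpr ha)]

theorem integral_exp_div_sq_sub_sq {a ε : ℝ} (ha : a ≠ 0) (hε : 0 < ε) (t : ℝ) :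
    ∫ τ : ℝ, cexp (-I * t * τ) / ((a : ℂ) ^ 2 - (τ + I * ε) ^ 2)
      = 2 * π * retardedKernel a ε t := by
  have hfourier : 𝓕 (retardedKernel a ε)
      = fun ξ => ((a : ℂ) ^ 2 - ((-(2 * π) * ξ : ℝ) + I * ε) ^ 2)⁻¹ :=
    funext (fourier_retardedKernel ha hε)
  have hfourier_int : Integrable (𝓕 (retardedKernel a ε)) := by
    rw [hfourier]
    exact (integrable_inv_sq_sub_sq a hε.ne').comp_mul_left' (neg_ne_zero.mpr Real.two_pi_pos.ne')
  have hinv := integral_exp_smul_fourier_neg_div (integrable_retardedKernel a hε) hfourier_int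
    (continuous_retardedKernel a ε).continuousAt (t := t)
  have hrescale : ∀ τ : ℝ, -(2 * π) * (-τ / (2 * π)) = τ := fun τ => by field_simp
  simp only [hfourier, hrescale, smul_eq_mul, ← div_eq_mul_inv, Complex.real_smul] at hinv
  exact_mod_cast hinv

theorem kg_resolvent_kernel_limit_general (a t : ℝ) (ha : 1 ≤ a) :
    Filter.Tendsto
      (fun ε : ℝ => ∫ τ : ℝ,
        Complex.exp (-Complex.I * (t : ℂ) * (τ : ℂ)) /
          ((a : ℂ) ^ 2 - ((τ : ℂ) + Complex.I * (ε : ℂ)) ^ 2))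
      (nhdsWithin 0 (Set.Ioi 0))
      (nhds (((2 * Real.pi : ℝ) : ℂ) * (if 0 ≤ t then (1 : ℂ) else 0) *
        ((Real.sin (t * a) : ℝ) : ℂ) / (a : ℂ))) := by
  have ha0 : a ≠ 0 := (zero_lt_one.trans_le ha).ne'
  have hlim := (((continuous_retardedKernel_damping a t).tendsto 0).mono_left
    (nhdsWithin_le_nhds (s := Ioi 0))).const_mul (2 * π : ℂ)
  have hval : 2 * π * retardedKernel a 0 t = ((2 * Real.pi : ℝ) : ℂ) *
      (if 0 ≤ t then (1 : ℂ) else 0) * ((Real.sin (t * a) : ℝ) : ℂ) / (a : ℂ) := by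
    rw [retardedKernel_apply, mul_comm t]
    split_ifs <;> simp [mul_div_assoc]
  rw [← hval]
  refine hlim.congr' ?_
  filter_upwards [self_mem_nhdsWithin] with ε hε
  exact (integral_exp_div_sq_sub_sq ha0 hε t).symm

/-- For `a ≥ 1` and `t ≠ 0`,
`lim_{ε→0⁺} ∫_ℝ e^{-itτ}/(a² - (τ+iε)²) dτ = 2π χ_{[0,∞)}(t) sin(ta)/a`. -/
theorem kg_resolvent_kernel_limit (a t : ℝ) (ha : 1 ≤ a) (ht : t ≠ 0) :
    Filter.Tendsto
      (fun ε : ℝ => ∫ τ : ℝ,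
        Complex.exp (-Complex.I * (t : ℂ) * (τ : ℂ)) /
          ((a : ℂ) ^ 2 - ((τ : ℂ) + Complex.I * (ε : ℂ)) ^ 2))
      (nhdsWithin 0 (Set.Ioi 0))
      (nhds (((2 * Real.pi : ℝ) : ℂ) * (if 0 ≤ t then (1 : ℂ) else 0) *
        ((Real.sin (t * a) : ℝ) : ℂ) / (a : ℂ))) :=
  kg_resolvent_kernel_limit_general a t ha
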